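/- Let b ≠ 0, 1 < α ≤ 2, and let u₀ ∈ L¹(ℝ) satisfy |u₀(x)| ≤ C₀(1+|x|)^{-α} for all x ∈ ℝ and some C₀ > 0. Set δ = ∫_ℝ u₀(x)dx and let χ_* be the self-similar profile with mass δ. Define w₀(x) ≡ exp(−(b/2)∫_{-∞}^x u₀(y)dy) − exp(−(b/2)∫_{-∞}^x χ_*(y)dy). Then there exists a constant C > 0 such that |w₀(x)| ≤ C(1+|x|)^{-(α-1)} for all x ∈ ℝ. -/

import Mathlib

open MeasureTheory Real Filter intervalIntegral

noncomputable section

/-- Green function `S(x,t)` of the linearized generalized KdV–Burgers equation: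
the inverse Fourier transform (in the convention `𝓕⁻¹[g](x) = (2π)^{-1/2} ∫ e^{ixξ} g(ξ) dξ`)
of `ξ ↦ exp(-t ξ² + i t k ξ³)`. -/
def greenS (k t x : ℝ) : ℂ :=
  ((Real.sqrt (2 * Real.pi) : ℝ) : ℂ)⁻¹ *
    ∫ ξ : ℝ, Complex.exp (Complex.I * x * ξ) *
      Complex.exp (-(t : ℂ) * ξ ^ 2 + Complex.I * t * k * ξ ^ 3)

/-- Self-similar profile `χ_*` with mass `δ`. -/
def chiStar (b δ x : ℝ) : ℝ :=
  (1 / b) * ((Real.exp (b * δ / 2) - 1) * Real.exp (-x ^ 2 / 4)) /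
    (Real.sqrt Real.pi + (Real.exp (b * δ / 2) - 1) * ∫ y in Set.Ioi (x / 2), Real.exp (-y ^ 2))

/-- Nonlinear diffusion wave `χ(x,t) = (1+t)^{-1/2} χ_*(x/√(1+t))`. -/
def chi (b δ t x : ℝ) : ℝ := (1 + t) ^ (-(1 : ℝ) / 2) * chiStar b δ (x / Real.sqrt (1 + t))

/-- `η_*(x) = exp((b/2)∫_{-∞}^x χ_*(y) dy)`. -/
def etaStar (b δ x : ℝ) : ℝ := Real.exp ((b / 2) * ∫ y in Set.Iio x, chiStar b δ y)

/-- `η(x,t) = η_*(x/√(1+t)) = exp((b/2)∫_{-∞}^x χ(y,t) dy)`. -/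
def etaFun (b δ t x : ℝ) : ℝ := etaStar b δ (x / Real.sqrt (1 + t))

/-- Heat kernel `G(x,t)`. -/
def heatG (t x : ℝ) : ℝ := (Real.sqrt (4 * Real.pi * t))⁻¹ * Real.exp (-x ^ 2 / (4 * t))

/-- `U[h](x,t,τ) = ∫ ∂ₓ(G(x−y,t−τ)η(x,t)) η(y,τ)⁻¹ (∫_{-∞}^y h) dy`. -/
def Uker (b δ : ℝ) (h : ℝ → ℝ) (x t τ : ℝ) : ℝ :=
  ∫ y : ℝ, deriv (fun x' => heatG (t - τ) (x' - y) * etaFun b δ t x') x *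
    (etaFun b δ τ y)⁻¹ * ∫ ξ in Set.Iio y, h ξ

/-- Second asymptotic profile `Z(x,t)` with constants `cp = c_α⁺`, `cm = c_α⁻`. -/
def Zprof (b δ cp cm α : ℝ) (t x : ℝ) : ℝ :=
  ∫ y : ℝ, (if 0 ≤ y then cp else cm) *
    deriv (fun x' => heatG t (x' - y) * etaFun b δ t x') x * (1 + |y|) ^ (-(α - 1))

/-- `d = ∫ η_*(y)⁻¹ χ_*(y)³ dy`. -/
def dConst (b δ : ℝ) : ℝ := ∫ y : ℝ, (etaStar b δ y)⁻¹ * (chiStar b δ y) ^ 3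

/-- `V_*(x) = (bχ_*(x) − x)e^{-x²/4} η_*(x)`. -/
def Vstar (b δ x : ℝ) : ℝ := (b * chiStar b δ x - x) * Real.exp (-x ^ 2 / 4) * etaStar b δ x

/-- Second asymptotic profile `V(x,t)`. -/
def Vprof (b c k δ t x : ℝ) : ℝ :=
  -(dConst b δ / (4 * Real.sqrt Real.pi)) * (b ^ 2 * k / 8 + c / 3) *
    Vstar b δ (x / Real.sqrt (1 + t)) * (1 + t)⁻¹ * Real.log (1 + t)

/-- The mild (Duhamel) formulation of the generalized KdV–Burgers equation
`u_t + ((b/2)u² + (c/3)u³)_x + k u_{xxx} = u_{xx}`, `u(·,0) = u₀`. -/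
def IsMildSolution (b c k : ℝ) (u₀ : ℝ → ℝ) (u : ℝ → ℝ → ℝ) : Prop :=
  (∀ x, u 0 x = u₀ x) ∧
  ∀ t > (0 : ℝ), ∀ x : ℝ,
    (u t x : ℂ) = (∫ y : ℝ, greenS k t (x - y) * (u₀ y : ℂ)) -
      ∫ τ in (0 : ℝ)..t, ∫ y : ℝ,
        deriv (fun z => greenS k (t - τ) z) (x - y) *
          ((b / 2 : ℂ) * (u τ y : ℂ) ^ 2 + (c / 3 : ℂ) * (u τ y : ℂ) ^ 3)

/-- A global solution of the generalized KdV–Burgers equation in `C⁰([0,∞); Hˢ)`. -/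
def IsGlobalSolution (s : ℕ) (b c k : ℝ) (u₀ : ℝ → ℝ) (u : ℝ → ℝ → ℝ) : Prop :=
  (∀ t, 0 ≤ t → ContDiff ℝ s (u t) ∧ ∀ j ≤ s, MemLp (iteratedDeriv j (u t)) 2 volume) ∧
  Continuous (fun p : ℝ × ℝ => u p.1 p.2) ∧
  IsMildSolution b c k u₀ u

/-- `w₀(x) = exp(−(b/2)∫_{-∞}^x u₀) − exp(−(b/2)∫_{-∞}^x χ_*)`, with `δ = ∫ u₀`. -/
def w0 (b : ℝ) (u₀ : ℝ → ℝ) (x : ℝ) : ℝ :=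
  Real.exp (-(b / 2) * ∫ y in Set.Iio x, u₀ y) -
    Real.exp (-(b / 2) * ∫ y in Set.Iio x, chiStar b (∫ z : ℝ, u₀ z) y)

/-- `w(x,t) = exp(−(b/2)∫_{-∞}^x u(y,t)dy) − η(x,t)⁻¹`, with `δ = ∫ u₀`. -/
def wFun (b : ℝ) (u₀ : ℝ → ℝ) (u : ℝ → ℝ → ℝ) (t x : ℝ) : ℝ :=
  Real.exp (-(b / 2) * ∫ y in Set.Iio x, u t y) - (etaFun b (∫ y : ℝ, u₀ y) t x)⁻¹

end

/-!
Writing `F` for the denominator of `χ_*`, one has `χ_* = -(2/b) (log F)'`, and `F` stays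
between its limits `√π · e^{bδ/2}` at `-∞` and `√π` at `+∞`; this gives both the mass
`∫ χ_* = δ` and a Gaussian bound on `χ_*`. Hence `h = u₀ - χ_*` has zero mass and decays like
`(1+|x|)^{-α}`, so its primitive `∫_{-∞}^x h = -∫_x^∞ h` decays like `(1+|x|)^{-(α-1)}`.
Finally `w₀(x)` is a difference of exponentials of two uniformly bounded exponents whose
difference is `-(b/2) ∫_{-∞}^x h`, and `exp` is Lipschitz on bounded sets.
-/

open Set Topology

lemma abs_exp_sub_exp_le {R a c : ℝ} (ha : |a| ≤ R) (hc : |c| ≤ R) :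
    |exp a - exp c| ≤ exp R * |a - c| := by
  simpa only [Real.norm_eq_abs, Real.deriv_exp] using
    (convex_Icc (-R) R).norm_image_sub_le_of_norm_deriv_le (fun t _ => differentiableAt_exp)
      (fun t ht => by simpa only [Real.norm_eq_abs, Real.deriv_exp, abs_of_pos (exp_pos t),
        exp_le_exp] using ht.2) (abs_le.1 hc) (abs_le.1 ha)

lemma abs_exp_mul_setIntegral_sub_le {X : Type*} [MeasurableSpace X] {μ : Measure X}
    {f g : X → ℝ} (hf : Integrable f μ) (hg : Integrable g μ) (β : ℝ) (s : Set X) :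
    |exp (β * ∫ y in s, f y ∂μ) - exp (β * ∫ y in s, g y ∂μ)| ≤
      exp (|β| * (∫ y, |f y| ∂μ + ∫ y, |g y| ∂μ)) * |β| * |∫ y in s, (f y - g y) ∂μ| := by
  have abs_setIntegral_le {φ : X → ℝ} (hφ : Integrable φ μ) :
      |∫ y in s, φ y ∂μ| ≤ ∫ y, |φ y| ∂μ :=
    abs_integral_le_integral_abs.trans
      (setIntegral_le_integral hφ.abs (ae_of_all _ fun _ => abs_nonneg _))
  have hf₀ : 0 ≤ ∫ y, |f y| ∂μ := integral_nonneg fun _ => abs_nonneg _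
  have hg₀ : 0 ≤ ∫ y, |g y| ∂μ := integral_nonneg fun _ => abs_nonneg _
  rw [integral_sub hf.integrableOn hg.integrableOn, mul_assoc, ← abs_mul, mul_sub]
  refine abs_exp_sub_exp_le ?_ ?_ <;> rw [abs_mul] <;> gcongr
  · exact (abs_setIntegral_le hf).trans (le_add_of_nonneg_right hg₀)
  · exact (abs_setIntegral_le hg).trans (le_add_of_nonneg_left hf₀)

lemma exp_neg_sq_div_four_le {α : ℝ} (hα : α ≤ 2) (x : ℝ) :
    exp (-x ^ 2 / 4) ≤ 8 * (1 + |x|) ^ (-α) := by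
  have hx : (1 : ℝ) ≤ 1 + |x| := le_add_of_nonneg_right (abs_nonneg x)
  -- `(1 + |x|)² ≤ 2 (1 + x²) ≤ 8 (1 + x²/4) ≤ 8 e^{x²/4}`
  have hsq : (1 + |x|) ^ 2 * exp (-x ^ 2 / 4) ≤ 8 := by
    have hinv : exp (x ^ 2 / 4) * exp (-x ^ 2 / 4) = 1 := by
      rw [← exp_add, show x ^ 2 / 4 + -x ^ 2 / 4 = 0 by ring, exp_zero]
    nlinarith [add_one_le_exp (x ^ 2 / 4), sq_abs x, sq_nonneg (1 - |x|), exp_pos (-x ^ 2 / 4)]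
  calc exp (-x ^ 2 / 4) ≤ 8 * (1 + |x|) ^ (-2 : ℝ) := by
        rw [rpow_neg (by positivity), rpow_two, ← div_eq_mul_inv, le_div_iff₀ (by positivity),
          mul_comm]
        exact hsq
    _ ≤ 8 * (1 + |x|) ^ (-α) := by gcongr

section PowerTail

variable {α : ℝ}

lemma integrableOn_Ioi_one_add_rpow_neg (hα : 1 < α) {x : ℝ} (hx : -1 < x) :
    IntegrableOn (fun y : ℝ => (1 + y) ^ (-α)) (Ioi x) := by
  simpa only [add_comm] using
    integrableOn_add_rpow_Ioi_of_lt (m := 1) (by linarith : -α < -1) hx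

lemma integral_Ioi_one_add_rpow_neg (hα : 1 < α) {x : ℝ} (hx : -1 < x) :
    ∫ y in Ioi x, (1 + y) ^ (-α) = (1 + x) ^ (-(α - 1)) / (α - 1) := by
  have hderiv : ∀ y ∈ Ici x,
      HasDerivAt (fun y : ℝ => -(1 + y) ^ (-(α - 1)) / (α - 1)) ((1 + y) ^ (-α)) y := by
    intro y hy
    have hy : 0 < 1 + y := by linarith [mem_Ici.1 hy]
    refine ((((hasDerivAt_id y).const_add 1).rpow_const (p := -(α - 1))
      (Or.inl hy.ne')).neg.div_const (α - 1)).congr_deriv ?_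
    rw [show -(α - 1) - 1 = -α by ring]
    field_simp [show α - 1 ≠ 0 by linarith]
    simp
  have hlim : Tendsto (fun y : ℝ => -(1 + y) ^ (-(α - 1)) / (α - 1)) atTop (𝓝 0) := by
    simpa using ((tendsto_rpow_neg_atTop (by linarith : 0 < α - 1)).comp
      (tendsto_atTop_add_const_left _ 1 tendsto_id)).neg.div_const (α - 1)
  rw [integral_Ioi_of_hasDerivAt_of_tendsto' hderiv
    (integrableOn_Ioi_one_add_rpow_neg hα hx) hlim]
  ring

variable {D : ℝ} {h : ℝ → ℝ}

lemma abs_integral_Ioi_le (hα : 1 < α) (hh : Integrable h)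
    (hD : ∀ y, |h y| ≤ D * (1 + |y|) ^ (-α)) {x : ℝ} (hx : 0 ≤ x) :
    |∫ y in Ioi x, h y| ≤ D / (α - 1) * (1 + x) ^ (-(α - 1)) :=
  calc |∫ y in Ioi x, h y| ≤ ∫ y in Ioi x, |h y| := abs_integral_le_integral_abs
    _ ≤ ∫ y in Ioi x, D * (1 + y) ^ (-α) :=
        setIntegral_mono_on hh.abs.integrableOn
          ((integrableOn_Ioi_one_add_rpow_neg hα (by linarith)).const_mul D) measurableSet_Ioi
          fun y hy => by simpa only [abs_of_pos (hx.trans_lt hy)] using hD y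
    _ = D / (α - 1) * (1 + x) ^ (-(α - 1)) := by
        rw [MeasureTheory.integral_const_mul, integral_Ioi_one_add_rpow_neg hα (by linarith)]
        ring

lemma abs_integral_Iio_le_of_integral_eq_zero (hα : 1 < α) (hh : Integrable h)
    (hD : ∀ y, |h y| ≤ D * (1 + |y|) ^ (-α)) (hzero : ∫ y, h y = 0) (x : ℝ) :
    |∫ y in Iio x, h y| ≤ D / (α - 1) * (1 + |x|) ^ (-(α - 1)) := by
  rcases le_total 0 x with hx | hx
  · have hsplit := integral_Iio_add_Ici (b := x) hh.integrableOn hh.integrableOn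
    rw [hzero, integral_Ici_eq_integral_Ioi, add_eq_zero_iff_eq_neg] at hsplit
    rw [hsplit, abs_neg, abs_of_nonneg hx]
    exact abs_integral_Ioi_le hα hh hD hx
  · have hreflect : ∫ y in Iio x, h y = ∫ y in Ioi (-x), h (-y) := by
      rw [integral_comp_neg_Ioi, neg_neg, integral_Iic_eq_integral_Iio]
    rw [hreflect, abs_of_nonpos hx, ← sub_eq_add_neg]
    exact abs_integral_Ioi_le hα (hh.comp_neg) (fun y => by simpa using hD (-y))
      (neg_nonneg.2 hx)

end PowerTail

section IntegralIoi

variable {f : ℝ → ℝ}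

lemma integral_Ioi_eq_integral_sub (hf : Integrable f) (c : ℝ) :
    ∫ y in Ioi c, f y = (∫ y, f y) - ∫ y in Iic c, f y := by
  rw [← integral_Iic_add_Ioi hf.integrableOn hf.integrableOn, add_sub_cancel_left]

lemma hasDerivAt_integral_Ioi (hf : Integrable f) (hcont : Continuous f) (c : ℝ) :
    HasDerivAt (fun c => ∫ y in Ioi c, f y) (-f c) c := by
  have hsplit : (fun c => ∫ y in Ioi c, f y) =
      fun c => (∫ y, f y) - ((∫ y in Iic 0, f y) + ∫ y in 0..c, f y) := funext fun d => by
    rw [integral_Ioi_eq_integral_sub hf,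
      ← integral_Iic_sub_Iic hf.integrableOn hf.integrableOn, add_sub_cancel]
  rw [hsplit]
  exact ((hcont.integral_hasStrictDerivAt 0 c).hasDerivAt.const_add _).const_sub _

lemma tendsto_integral_Ioi_atBot (hf : Integrable f) :
    Tendsto (fun c => ∫ y in Ioi c, f y) atBot (𝓝 (∫ y, f y)) := by
  simp_rw [integral_Ioi_eq_integral_sub hf]
  simpa using (tendsto_integral_Iic_zero (f := f) (μ := volume) tendsto_id).const_sub (∫ y, f y)

end IntegralIoi

lemma integrable_exp_neg_sq : Integrable fun y : ℝ => exp (-y ^ 2) := by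
  simpa using integrable_exp_neg_mul_sq one_pos

lemma integral_exp_neg_sq : ∫ y : ℝ, exp (-y ^ 2) = √π := by
  simpa using integral_gaussian 1

section ChiStar

variable (b δ : ℝ)

noncomputable def chiStarDenom (x : ℝ) : ℝ :=
  √π + (exp (b * δ / 2) - 1) * ∫ y in Ioi (x / 2), exp (-y ^ 2)

lemma chiStar_eq (x : ℝ) :
    chiStar b δ x = (exp (b * δ / 2) - 1) / b * exp (-x ^ 2 / 4) / chiStarDenom b δ x := by
  rw [chiStar, chiStarDenom]
  ring

/-- `chiStarDenom` is a convex combination of `√π` and `√π e^{bδ/2}`, since the Gaussian tail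
lies in `[0, √π]`. -/
lemma le_chiStarDenom (x : ℝ) : √π * min 1 (exp (b * δ / 2)) ≤ chiStarDenom b δ x := by
  have htail₀ : 0 ≤ ∫ y in Ioi (x / 2), exp (-y ^ 2) :=
    setIntegral_nonneg measurableSet_Ioi fun _ _ => (exp_pos _).le
  have htail₁ : ∫ y in Ioi (x / 2), exp (-y ^ 2) ≤ √π :=
    integral_exp_neg_sq ▸
      setIntegral_le_integral integrable_exp_neg_sq (ae_of_all _ fun _ => (exp_pos _).le)
  have hpi : 0 ≤ √π := sqrt_nonneg π
  rw [chiStarDenom]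
  rcases le_total 1 (exp (b * δ / 2)) with hθ | hθ
  · nlinarith [min_le_left 1 (exp (b * δ / 2))]
  · nlinarith [min_le_right 1 (exp (b * δ / 2))]

lemma chiStarDenom_pos (x : ℝ) : 0 < chiStarDenom b δ x :=
  lt_of_lt_of_le (by positivity) (le_chiStarDenom b δ x)

lemma hasDerivAt_chiStarDenom (x : ℝ) :
    HasDerivAt (chiStarDenom b δ) (-((exp (b * δ / 2) - 1) / 2) * exp (-x ^ 2 / 4)) x := by
  have htail := (hasDerivAt_integral_Ioi integrable_exp_neg_sq
    (continuous_exp.comp (continuous_pow 2).neg) (x / 2)).comp x ((hasDerivAt_id x).div_const 2)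
  refine ((htail.const_mul _).const_add √π).congr_deriv ?_
  rw [show -(x / 2) ^ 2 = -x ^ 2 / 4 by ring]
  ring

lemma continuous_chiStar : Continuous (chiStar b δ) := by
  have hdenom : Continuous (chiStarDenom b δ) :=
    continuous_iff_continuousAt.2 fun x => (hasDerivAt_chiStarDenom b δ x).continuousAt
  simp_rw [funext (chiStar_eq b δ)]
  exact (continuous_const.mul (continuous_exp.comp (by fun_prop))).div hdenom
    fun x => (chiStarDenom_pos b δ x).ne'

lemma abs_chiStar_le (x : ℝ) :
    |chiStar b δ x| ≤
      |(exp (b * δ / 2) - 1) / b| / (√π * min 1 (exp (b * δ / 2))) * exp (-x ^ 2 / 4) := by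
  rw [chiStar_eq, abs_div, abs_mul, abs_of_pos (exp_pos _), abs_of_pos (chiStarDenom_pos b δ x),
    div_mul_eq_mul_div]
  gcongr
  exact le_chiStarDenom b δ x

lemma integrable_chiStar : Integrable (chiStar b δ) := by
  refine Integrable.mono' ((integrable_exp_neg_mul_sq (by norm_num : (0 : ℝ) < 1 / 4)).const_mul
    (|(exp (b * δ / 2) - 1) / b| / (√π * min 1 (exp (b * δ / 2)))))
    (continuous_chiStar b δ).aestronglyMeasurable (ae_of_all _ fun x => ?_)
  rw [Real.norm_eq_abs, show -(1 / 4) * x ^ 2 = -x ^ 2 / 4 by ring]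
  exact abs_chiStar_le b δ x

lemma hasDerivAt_log_chiStarDenom (x : ℝ) :
    HasDerivAt (fun x => -(2 / b) * log (chiStarDenom b δ x)) (chiStar b δ x) x := by
  refine (((hasDerivAt_chiStarDenom b δ x).log (chiStarDenom_pos b δ x).ne').const_mul _
    ).congr_deriv ?_
  rw [chiStar_eq]
  ring

end ChiStar

lemma integral_chiStar {b : ℝ} (hb : b ≠ 0) (δ : ℝ) : ∫ x, chiStar b δ x = δ := by
  have hpi : 0 < √π := sqrt_pos.2 pi_pos
  have htail := tendsto_integral_Ioi_atBot integrable_exp_neg_sq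
  rw [integral_exp_neg_sq] at htail
  have hbot : Tendsto (chiStarDenom b δ) atBot (𝓝 (√π + (exp (b * δ / 2) - 1) * √π)) :=
    ((htail.comp (tendsto_id.atBot_div_const two_pos)).const_mul _).const_add √π
  rw [show √π + (exp (b * δ / 2) - 1) * √π = √π * exp (b * δ / 2) by ring] at hbot
  have htop : Tendsto (chiStarDenom b δ) atTop (𝓝 (√π + (exp (b * δ / 2) - 1) * 0)) :=
    ((tendsto_integral_Ioi_zero (f := fun y : ℝ => exp (-y ^ 2)) (μ := volume)
      (tendsto_id.atTop_div_const two_pos)).const_mul _).const_add √π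
  rw [mul_zero, add_zero] at htop
  rw [integral_of_hasDerivAt_of_tendsto (hasDerivAt_log_chiStarDenom b δ) (integrable_chiStar b δ)
    (((continuousAt_log (by positivity)).tendsto.comp hbot).const_mul _)
    (((continuousAt_log hpi.ne').tendsto.comp htop).const_mul _),
    log_mul hpi.ne' (exp_pos _).ne', log_exp]
  field_simp
  ring

/-- Estimate (3-8): `|w₀(x)| ≤ C(1+|x|)^{-(α-1)}` for slowly decaying data. -/
theorem stmt9 (b α : ℝ) (hb : b ≠ 0) (hα1 : 1 < α) (hα2 : α ≤ 2)
    (u₀ : ℝ → ℝ) (hInt : Integrable u₀ volume) (C₀ : ℝ) (hC₀ : 0 < C₀)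
    (hdecay : ∀ x : ℝ, |u₀ x| ≤ C₀ * (1 + |x|) ^ (-α)) :
    ∃ C > (0 : ℝ), ∀ x : ℝ, |w0 b u₀ x| ≤ C * (1 + |x|) ^ (-(α - 1)) := by
  set δ := ∫ z, u₀ z
  set K := |(exp (b * δ / 2) - 1) / b| / (√π * min 1 (exp (b * δ / 2)))
  set D := C₀ + 8 * K
  have hχ := integrable_chiStar b δ
  have hdiff_le (y : ℝ) : |u₀ y - chiStar b δ y| ≤ D * (1 + |y|) ^ (-α) :=
    calc |u₀ y - chiStar b δ y| ≤ |u₀ y| + |chiStar b δ y| := abs_sub _ _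
      _ ≤ C₀ * (1 + |y|) ^ (-α) + K * (8 * (1 + |y|) ^ (-α)) :=
          add_le_add (hdecay y) ((abs_chiStar_le b δ y).trans
            (mul_le_mul_of_nonneg_left (exp_neg_sq_div_four_le hα2 y) (by positivity)))
      _ = D * (1 + |y|) ^ (-α) := by ring
  have hmass : ∫ y, (u₀ y - chiStar b δ y) = 0 := by
    rw [integral_sub hInt hχ, integral_chiStar hb, sub_self]
  set β := -(b / 2)
  have hβ : 0 < |β| := abs_pos.2 (neg_ne_zero.2 (div_ne_zero hb two_ne_zero))
  refine ⟨exp (|β| * ((∫ y, |u₀ y|) + ∫ y, |chiStar b δ y|)) * |β| * (D / (α - 1)),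
    by have := sub_pos.2 hα1; positivity, fun x => ?_⟩
  calc |w0 b u₀ x|
      ≤ exp (|β| * ((∫ y, |u₀ y|) + ∫ y, |chiStar b δ y|)) * |β| *
          |∫ y in Iio x, (u₀ y - chiStar b δ y)| := abs_exp_mul_setIntegral_sub_le hInt hχ β (Iio x)
    _ ≤ _ := by
        rw [mul_assoc _ (D / (α - 1))]
        gcongr
        exact abs_integral_Iio_le_of_integral_eq_zero hα1 (hInt.sub hχ) hdiff_le hmass x
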